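/- arXiv:2409.03176 — 8 statements merged into one kernel-verified Lean document; each statement's English description precedes it below -/
import Mathlib

section
/- Let $G$ be a connected $k$-regular finite simple graph and let $T \subseteq V(G)$ be an independent set. Then $k \cdot |T| \le k \cdot |N_G(T)|$, i.e., $|T| \le |N_G(T)|$. In particular, if $G$ is not bipartite, then $|T| < |N_G(T)|$ for every independent set $T$. -/
open Finset

theorem stmt_1 {V : Type*} [Fintype V] [DecidableEq V]
    (G : SimpleGraph V) [DecidableRel G.Adj] (k : ℕ) (hk : 1 ≤ k)
    (hconn : G.Connected) (hreg : G.IsRegularOfDegree k)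
    (T : Finset V) (hTne : T.Nonempty)
    (hind : ∀ v ∈ T, ∀ w ∈ T, ¬ G.Adj v w)
    (N : Finset V) (hN : N = Finset.univ.filter (fun w => ∃ v ∈ T, G.Adj v w)) :
    k * T.card ≤ k * N.card ∧ T.card ≤ N.card ∧
      (¬ G.Colorable 2 → T.card < N.card) := by
  classical
  set d : V → ℕ := fun w => (T.filter (fun v => G.Adj v w)).card with hd
  have hdle : ∀ w, d w ≤ k := by
    intro w
    have hsub : T.filter (fun v => G.Adj v w) ⊆ G.neighborFinset w := by
      intro v hv
      simp only [mem_filter] at hv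
      simpa [SimpleGraph.mem_neighborFinset] using hv.2.symm
    calc d w ≤ (G.neighborFinset w).card := Finset.card_le_card hsub
      _ = k := hreg w
  have hzero : ∀ w ∉ N, d w = 0 := by
    intro w hw
    rw [hN, mem_filter] at hw
    push_neg at hw
    have : T.filter (fun v => G.Adj v w) = ∅ := by
      apply Finset.filter_false_of_mem
      intro v hv
      exact hw (mem_univ w) v hv
    simp [hd, this]
  have hsum : k * T.card = ∑ w ∈ N, d w := by
    have h1 : k * T.card = ∑ v ∈ T, (G.neighborFinset v).card := by
      have h : ∑ v ∈ T, (G.neighborFinset v).card = ∑ v ∈ T, k :=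
        Finset.sum_congr rfl (fun v _ => hreg v)
      rw [h]; simp [mul_comm]
    have h2 : ∑ v ∈ T, (G.neighborFinset v).card = ∑ w : V, d w := by
      simp only [SimpleGraph.neighborFinset_eq_filter, hd, Finset.card_filter]
      rw [Finset.sum_comm]
    have h3 : ∑ w : V, d w = ∑ w ∈ N, d w := by
      refine (Finset.sum_subset (Finset.subset_univ N) ?_).symm
      intro w _ hw
      exact hzero w hw
    rw [h1, h2, h3]
  have hmain : k * T.card ≤ k * N.card := by
    rw [hsum]
    calc ∑ w ∈ N, d w ≤ ∑ w ∈ N, k := Finset.sum_le_sum (fun w _ => hdle w)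
      _ = k * N.card := by simp [mul_comm]
  have hle : T.card ≤ N.card := Nat.le_of_mul_le_mul_left hmain hk
  refine ⟨hmain, hle, ?_⟩
  intro hnc
  by_contra hlt
  have heq : T.card = N.card := le_antisymm hle (not_lt.mp hlt)
  -- equality in the sum: every w in N has d w = k
  have hsumeq : ∑ w ∈ N, d w = ∑ w ∈ N, k := by
    rw [← hsum, heq]; simp [mul_comm]
  have hdk : ∀ w ∈ N, d w = k := by
    intro w hw
    by_contra hne
    have hstrict : d w < k := lt_of_le_of_ne (hdle w) hne
    have : ∑ w ∈ N, d w < ∑ w ∈ N, k :=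
      Finset.sum_lt_sum (fun w _ => hdle w) ⟨w, hw, hstrict⟩
    omega
  -- for w ∈ N, all neighbors of w are in T
  have hnbr : ∀ w ∈ N, ∀ v, G.Adj w v → v ∈ T := by
    intro w hw v hadj
    have hsub : T.filter (fun v => G.Adj v w) ⊆ G.neighborFinset w := by
      intro v hv
      simp only [mem_filter] at hv
      simpa [SimpleGraph.mem_neighborFinset] using hv.2.symm
    have hcard : (G.neighborFinset w).card ≤ (T.filter (fun v => G.Adj v w)).card := by
      have h1 : (G.neighborFinset w).card = k := hreg w
      rw [h1]
      exact (hdk w hw).ge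
    have heqset : T.filter (fun v => G.Adj v w) = G.neighborFinset w :=
      Finset.eq_of_subset_of_card_le hsub hcard
    have : v ∈ T.filter (fun v => G.Adj v w) := by
      rw [heqset]
      simpa [SimpleGraph.mem_neighborFinset] using hadj
    exact (mem_filter.mp this).1
  have hTN : ∀ v ∈ T, v ∉ N := by
    intro v hv hvN
    rw [hN, mem_filter] at hvN
    obtain ⟨u, hu, hadj⟩ := hvN.2
    exact hind u hu v hv hadj
  -- closure: every vertex is in T ∪ N
  have hstep : ∀ v w, G.Adj v w → (v ∈ T ∨ v ∈ N) → (w ∈ T ∨ w ∈ N) := by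
    intro v w hadj hv
    rcases hv with hv | hv
    · right
      rw [hN, mem_filter]
      exact ⟨mem_univ w, v, hv, hadj⟩
    · left
      exact hnbr v hv w hadj
  obtain ⟨t, ht⟩ := hTne
  have key : ∀ (a b : V) (p : G.Walk a b), (a ∈ T ∨ a ∈ N) → (b ∈ T ∨ b ∈ N) := by
    intro a b p
    induction p with
    | nil => exact id
    | cons h q ih => exact fun ha => ih (hstep _ _ h ha)
  have hall : ∀ v : V, v ∈ T ∨ v ∈ N := by
    intro v
    obtain ⟨p⟩ := hconn.preconnected t v
    exact key t v p (Or.inl ht)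
  apply hnc
  refine ⟨SimpleGraph.Coloring.mk (fun v => if v ∈ T then (0 : Fin 2) else 1) ?_⟩
  intro v w hadj
  by_cases hv : v ∈ T
  · have hwN : w ∈ N := by
      rw [hN, mem_filter]; exact ⟨mem_univ w, v, hv, hadj⟩
    have hwT : w ∉ T := fun hwT => hTN w hwT hwN
    simp [hv, hwT]
  · have hvN : v ∈ N := (hall v).resolve_left hv
    have hwT : w ∈ T := hnbr v hvN w hadj
    simp [hv, hwT]
end

section
/- For integers $m, n \ge 3$ and $k \ge 0$, the number of lattice points $(x_1,\ldots,x_{m+n}) \in \mathbb{Z}_{\ge 0}^{m+n}$ satisfying $\sum_{j=1}^m x_j = k$, $\sum_{j=1}^n x_{m+j} = k$, and $x_i + x_{m+i} \ge k+1$ (for a fixed index $i$ with $1 \le i \le \min\{m,n\}$) equals $\binom{k + m + n - 3}{m + n - 2}$. -/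
open Finset


lemma card_fixed_sum (e s : ℕ) :
    Nat.card {y : Fin e → ℕ | ∑ j, y j = s} = (e + s - 1).choose s := by
  have E : {y : Fin e → ℕ | ∑ j, y j = s} ≃ Sym (Fin e) s := by
    refine Equiv.subtypeEquiv
      (Finsupp.equivFunOnFinite.symm.trans Multiset.toFinsupp.symm.toEquiv) ?_
    intro y
    show (∑ j, y j = s) ↔ Multiset.card (Finsupp.toMultiset _) = s
    rw [Finsupp.card_toMultiset, Finsupp.sum_fintype _ _ (fun _ => rfl)]
    simp
  rw [Nat.card_congr E, Nat.card_eq_fintype_card, Sym.card_sym_eq_choose]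
  simp

lemma card_zero_coord (d s : ℕ) (hd : 1 ≤ d) (p : Fin d) :
    Nat.card {y : Fin d → ℕ | (∑ j, y j) = s ∧ y p = 0} = (d + s - 2).choose s := by
  obtain ⟨e, rfl⟩ : ∃ e, d = e + 1 := ⟨d - 1, by omega⟩
  have E : {y : Fin (e+1) → ℕ | (∑ j, y j) = s ∧ y p = 0} ≃ {y : Fin e → ℕ | ∑ j, y j = s} := by
    refine ⟨fun y => ⟨p.removeNth y.1, ?_⟩, fun g => ⟨p.insertNth 0 g.1, ?_⟩, ?_, ?_⟩
    · have h := Fin.sum_univ_succAbove y.1 p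
      have := y.2
      simp only [Set.mem_setOf_eq] at this ⊢
      simp [Fin.removeNth]
      omega
    · have h := Fin.sum_univ_succAbove (p.insertNth 0 g.1) p
      have := g.2
      simp only [Set.mem_setOf_eq] at this ⊢
      refine ⟨?_, Fin.insertNth_apply_same _ _ _⟩
      simp only [Fin.insertNth_apply_same, Fin.insertNth_apply_succAbove, zero_add] at h
      rw [h]; exact this
    · rintro ⟨y, hy⟩
      ext1
      simp only
      have : y p = 0 := hy.2
      conv_rhs => rw [← Fin.insertNth_self_removeNth p y]
      rw [this]
    · rintro ⟨g, hg⟩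
      ext1
      simp
  rw [Nat.card_congr E, card_fixed_sum]
  congr 1
  omega


lemma sum_ite_update_not {d : ℕ} (P : Fin d → Prop) [DecidablePred P] (f : Fin d → ℕ)
    (q : Fin d) (hq : ¬ P q) (v : ℕ) :
    (∑ j : Fin d, if P j then Function.update f q v j else 0)
      = ∑ j : Fin d, if P j then f j else 0 := by
  refine Finset.sum_congr rfl fun j _ => ?_
  split_ifs with h
  · rw [Function.update_of_ne]; rintro rfl; exact hq h
  · rfl

lemma sum_ite_update_mem {d : ℕ} (P : Fin d → Prop) [DecidablePred P] (f : Fin d → ℕ)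
    (q : Fin d) (hq : P q) (v : ℕ) :
    (∑ j : Fin d, if P j then Function.update f q v j else 0) + f q
      = (∑ j : Fin d, if P j then f j else 0) + v := by
  have h1 : ∀ g : Fin d → ℕ, (∑ j : Fin d, if P j then g j else 0)
      = ∑ j ∈ Finset.univ.filter P, g j := fun g => (Finset.sum_filter _ _).symm
  have hmem : q ∈ Finset.univ.filter P := by simp [hq]
  rw [h1, h1, Finset.sum_update_of_mem hmem, ← Finset.add_sum_erase _ f hmem,
    Finset.erase_eq]
  ring

lemma single_le_ite {d : ℕ} (P : Fin d → Prop) [DecidablePred P] (f : Fin d → ℕ)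
    (q : Fin d) (hq : P q) :
    f q ≤ ∑ j : Fin d, if P j then f j else 0 := by
  have := Finset.single_le_sum (f := fun j => if P j then f j else 0)
    (fun i _ => by positivity) (Finset.mem_univ q)
  simpa [hq] using this

lemma sum_ite_split {d m : ℕ} (f : Fin d → ℕ) :
    (∑ j : Fin d, if (j : ℕ) < m then f j else 0)
      + (∑ j : Fin d, if m ≤ (j : ℕ) then f j else 0) = ∑ j : Fin d, f j := by
  rw [← Finset.sum_add_distrib]
  refine Finset.sum_congr rfl fun j _ => ?_
  split_ifs <;> omega

lemma card_main (d m k : ℕ) (hk : 1 ≤ k) (q p : Fin d) (hq : (q : ℕ) < m) (hp : m ≤ (p : ℕ)) :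
    Nat.card {x : Fin d → ℕ |
        (∑ j : Fin d, if (j : ℕ) < m then x j else 0) = k ∧
        (∑ j : Fin d, if m ≤ (j : ℕ) then x j else 0) = k ∧
        k + 1 ≤ x q + x p}
    = Nat.card {y : Fin d → ℕ | (∑ j : Fin d, y j) = k - 1 ∧ y p = 0} := by
  have hqp : q ≠ p := fun h => by rw [h] at hq; omega
  have hpq : p ≠ q := hqp.symm
  have hnPp : ¬ ((p : ℕ) < m) := by omega
  have hnQq : ¬ (m ≤ (q : ℕ)) := by omega
  refine Nat.card_congr ⟨?_, ?_, ?_, ?_⟩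
  · rintro ⟨x, hx1, hx2, hx3⟩
    refine ⟨Function.update (Function.update x q (x q + x p - (k + 1))) p 0, ?_,
      Function.update_self _ _ _⟩
    have h1 := sum_ite_update_not (fun j : Fin d => (j : ℕ) < m)
      (Function.update x q (x q + x p - (k + 1))) p hnPp 0
    have h2 := sum_ite_update_mem (fun j : Fin d => (j : ℕ) < m) x q hq
      (x q + x p - (k + 1))
    have h3 := sum_ite_update_mem (fun j : Fin d => m ≤ (j : ℕ))
      (Function.update x q (x q + x p - (k + 1))) p hp 0
    have h4 := sum_ite_update_not (fun j : Fin d => m ≤ (j : ℕ)) x q hnQq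
      (x q + x p - (k + 1))
    have h5 : Function.update x q (x q + x p - (k + 1)) p = x p :=
      Function.update_of_ne hpq _ _
    have h6 := single_le_ite (fun j : Fin d => (j : ℕ) < m) x q hq
    have h7 := single_le_ite (fun j : Fin d => m ≤ (j : ℕ)) x p hp
    have h8 := sum_ite_split (m := m)
      (Function.update (Function.update x q (x q + x p - (k + 1))) p 0)
    omega
  · rintro ⟨y, hy1, hy2⟩
    have hs := sum_ite_split (m := m) y
    have h6 := single_le_ite (fun j : Fin d => (j : ℕ) < m) y q hq
    have h1 := sum_ite_update_not (fun j : Fin d => (j : ℕ) < m)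
      (Function.update y q (y q + (k - (∑ j : Fin d, if (j : ℕ) < m then y j else 0))))
      p hnPp (k - (∑ j : Fin d, if m ≤ (j : ℕ) then y j else 0))
    have h2 := sum_ite_update_mem (fun j : Fin d => (j : ℕ) < m) y q hq
      (y q + (k - (∑ j : Fin d, if (j : ℕ) < m then y j else 0)))
    have h3 := sum_ite_update_mem (fun j : Fin d => m ≤ (j : ℕ))
      (Function.update y q (y q + (k - (∑ j : Fin d, if (j : ℕ) < m then y j else 0))))
      p hp (k - (∑ j : Fin d, if m ≤ (j : ℕ) then y j else 0))
    have h4 := sum_ite_update_not (fun j : Fin d => m ≤ (j : ℕ)) y q hnQq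
      (y q + (k - (∑ j : Fin d, if (j : ℕ) < m then y j else 0)))
    have h5 : Function.update y q
        (y q + (k - (∑ j : Fin d, if (j : ℕ) < m then y j else 0))) p = y p :=
      Function.update_of_ne hpq _ _
    refine ⟨Function.update (Function.update y q
        (y q + (k - (∑ j : Fin d, if (j : ℕ) < m then y j else 0)))) p
        (k - (∑ j : Fin d, if m ≤ (j : ℕ) then y j else 0)), ?_, ?_, ?_⟩
    · omega
    · omega
    · have e1 : Function.update (Function.update y q
          (y q + (k - (∑ j : Fin d, if (j : ℕ) < m then y j else 0)))) p
          (k - (∑ j : Fin d, if m ≤ (j : ℕ) then y j else 0)) q =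
          y q + (k - (∑ j : Fin d, if (j : ℕ) < m then y j else 0)) := by
        rw [Function.update_of_ne hqp, Function.update_self]
      have e2 : Function.update (Function.update y q
          (y q + (k - (∑ j : Fin d, if (j : ℕ) < m then y j else 0)))) p
          (k - (∑ j : Fin d, if m ≤ (j : ℕ) then y j else 0)) p =
          (k - (∑ j : Fin d, if m ≤ (j : ℕ) then y j else 0)) :=
        Function.update_self _ _ _
      rw [e1, e2]
      omega
  · rintro ⟨x, hx1, hx2, hx3⟩
    ext j
    simp only
    have h6 := single_le_ite (fun j : Fin d => (j : ℕ) < m) x q hq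
    have h7 := single_le_ite (fun j : Fin d => m ≤ (j : ℕ)) x p hp
    have h1 := sum_ite_update_not (fun j : Fin d => (j : ℕ) < m)
      (Function.update x q (x q + x p - (k + 1))) p hnPp 0
    have h2 := sum_ite_update_mem (fun j : Fin d => (j : ℕ) < m) x q hq
      (x q + x p - (k + 1))
    have h3 := sum_ite_update_mem (fun j : Fin d => m ≤ (j : ℕ))
      (Function.update x q (x q + x p - (k + 1))) p hp 0
    have h4 := sum_ite_update_not (fun j : Fin d => m ≤ (j : ℕ)) x q hnQq
      (x q + x p - (k + 1))
    have h5 : Function.update x q (x q + x p - (k + 1)) p = x p :=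
      Function.update_of_ne hpq _ _
    set y := Function.update (Function.update x q (x q + x p - (k + 1))) p 0 with hydef
    have hyq : y q = x q + x p - (k + 1) := by
      rw [hydef, Function.update_of_ne hqp, Function.update_self]
    rcases eq_or_ne j p with rfl | hjp
    · rw [Function.update_self]
      omega
    · rw [Function.update_of_ne hjp]
      rcases eq_or_ne j q with rfl | hjq
      · rw [Function.update_self]
        omega
      · rw [Function.update_of_ne hjq, hydef,
          Function.update_of_ne hjp, Function.update_of_ne hjq]
  · rintro ⟨y, hy1, hy2⟩
    ext j
    simp only
    have hs := sum_ite_split (m := m) y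
    have h6 := single_le_ite (fun j : Fin d => (j : ℕ) < m) y q hq
    have h1 := sum_ite_update_not (fun j : Fin d => (j : ℕ) < m)
      (Function.update y q (y q + (k - (∑ j : Fin d, if (j : ℕ) < m then y j else 0))))
      p hnPp (k - (∑ j : Fin d, if m ≤ (j : ℕ) then y j else 0))
    have h2 := sum_ite_update_mem (fun j : Fin d => (j : ℕ) < m) y q hq
      (y q + (k - (∑ j : Fin d, if (j : ℕ) < m then y j else 0)))
    have h3 := sum_ite_update_mem (fun j : Fin d => m ≤ (j : ℕ))
      (Function.update y q (y q + (k - (∑ j : Fin d, if (j : ℕ) < m then y j else 0))))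
      p hp (k - (∑ j : Fin d, if m ≤ (j : ℕ) then y j else 0))
    have h4 := sum_ite_update_not (fun j : Fin d => m ≤ (j : ℕ)) y q hnQq
      (y q + (k - (∑ j : Fin d, if (j : ℕ) < m then y j else 0)))
    have h5 : Function.update y q
        (y q + (k - (∑ j : Fin d, if (j : ℕ) < m then y j else 0))) p = y p :=
      Function.update_of_ne hpq _ _
    set x := Function.update (Function.update y q
      (y q + (k - (∑ j : Fin d, if (j : ℕ) < m then y j else 0)))) p
      (k - (∑ j : Fin d, if m ≤ (j : ℕ) then y j else 0)) with hxdef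
    have hxq : x q = y q + (k - (∑ j : Fin d, if (j : ℕ) < m then y j else 0)) := by
      rw [hxdef, Function.update_of_ne hqp, Function.update_self]
    have hxp : x p = k - (∑ j : Fin d, if m ≤ (j : ℕ) then y j else 0) := by
      rw [hxdef, Function.update_self]
    rcases eq_or_ne j p with rfl | hjp
    · rw [Function.update_self, hy2]
    · rw [Function.update_of_ne hjp]
      rcases eq_or_ne j q with rfl | hjq
      · rw [Function.update_self]
        omega
      · rw [Function.update_of_ne hjq, hxdef,
          Function.update_of_ne hjp, Function.update_of_ne hjq]

theorem stmt_4 (m n k i : ℕ) (hm : 3 ≤ m) (hn : 3 ≤ n)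
    (hi1 : 1 ≤ i) (hi2 : i ≤ min m n) :
    Set.ncard {x : Fin (m + n) → ℕ |
        (∑ j : Fin (m + n), if (j : ℕ) < m then x j else 0) = k ∧
        (∑ j : Fin (m + n), if m ≤ (j : ℕ) then x j else 0) = k ∧
        k + 1 ≤ x ⟨i - 1, by omega⟩ + x ⟨m + i - 1, by omega⟩} =
      (k + m + n - 3).choose (m + n - 2) := by
  rcases Nat.eq_zero_or_pos k with rfl | hk
  · have hempty : {x : Fin (m + n) → ℕ |
        (∑ j : Fin (m + n), if (j : ℕ) < m then x j else 0) = 0 ∧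
        (∑ j : Fin (m + n), if m ≤ (j : ℕ) then x j else 0) = 0 ∧
        0 + 1 ≤ x ⟨i - 1, by omega⟩ + x ⟨m + i - 1, by omega⟩} = ∅ := by
      ext x
      simp only [Set.mem_setOf_eq, Set.mem_empty_iff_false, iff_false, not_and]
      intro h1 h2
      have hq := single_le_ite (fun j : Fin (m + n) => (j : ℕ) < m) x
        ⟨i - 1, by omega⟩ (show i - 1 < m by omega)
      have hp := single_le_ite (fun j : Fin (m + n) => m ≤ (j : ℕ)) x
        ⟨m + i - 1, by omega⟩ (show m ≤ m + i - 1 by omega)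
      beta_reduce at hq hp
      omega
    rw [hempty, Set.ncard_empty, Nat.choose_eq_zero_of_lt (by omega)]
  · rw [← Nat.card_coe_set_eq]
    rw [card_main (m + n) m k hk ⟨i - 1, by omega⟩ ⟨m + i - 1, by omega⟩
      (show i - 1 < m by omega) (show m ≤ m + i - 1 by omega)]
    rw [card_zero_coord (m + n) (k - 1) (by omega)]
    have h := Nat.choose_symm (n := m + n + (k - 1) - 2) (k := m + n - 2) (by omega)
    have h2 : m + n + (k - 1) - 2 - (m + n - 2) = k - 1 := by omega
    rw [h2] at h
    rw [h]
    congr 1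
    omega
end

section
/- For all integers $m, n \ge 1$ and $k \ge 0$, the number of tuples $(x_1,\ldots,x_{m+n}) \in \mathbb{Z}_{\ge 0}^{m+n}$ with $\sum_{j=1}^m x_j = k$ and $\sum_{j=1}^n x_{m+j} = k$ equals $\binom{k+m-1}{m-1}\binom{k+n-1}{n-1}$, which also equals $\sum_{i=0}^{\min\{m,n\}} \binom{m-1}{i}\binom{n-1}{i}\binom{k+m+n-2-i}{m+n-2}$. -/
open Finset

/-!
Splitting a tuple into its first `m` and last `n` coordinates identifies the set with a product
of two sets of weak compositions of `k`, each counted by stars and bars.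

For the identity put `a = m - 1`, `b = n - 1`. Expand `C(k+a+b-i, a+b) = C((b-i) + (k+a), a+b)`
by Vandermonde and exchange the sums; after `C(b,i) C(b-i,q) = C(b,q) C(b-q,i)` the inner sum is
the diagonal Vandermonde sum `∑ᵢ C(a,i) C(b-q,i) = C(a+b-q, a)`. Then
`C(k+a, a+b-q) C(a+b-q, a) = C(k+a, a) C(k, b-q)`, and `∑_q C(b,q) C(k, b-q) = C(k+b, b)`.
-/

namespace Nat

theorem choose_mul_choose_sub_comm (b i q : ℕ) :
    b.choose i * (b - i).choose q = b.choose q * (b - q).choose i := by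
  have hi := choose_mul (n := b) (Nat.le_add_right i q)
  have hq := choose_mul (n := b) (Nat.le_add_left q i)
  rw [Nat.add_sub_cancel_left] at hi
  rw [Nat.add_sub_cancel] at hq
  rw [← hi, ← hq, choose_symm_add]

theorem sum_range_choose_mul_choose {c N : ℕ} (a : ℕ) (hN : c < N) :
    ∑ i ∈ range N, a.choose i * c.choose i = (a + c).choose c := by
  rw [eventually_constant_sum (fun i hi => by rw [choose_eq_zero_of_lt hi, mul_zero]) hN,
    add_choose_eq, Finset.Nat.sum_antidiagonal_eq_sum_range_succ_mk]
  exact sum_congr rfl fun i hi => by rw [choose_symm (mem_range_succ_iff.mp hi)]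

theorem add_choose_add_eq_sum_range {c b : ℕ} (n a : ℕ) (hcb : c ≤ b) :
    (c + n).choose (a + b) = ∑ q ∈ range (b + 1), c.choose q * n.choose (a + b - q) := by
  rw [add_choose_eq, Finset.Nat.sum_antidiagonal_eq_sum_range_succ_mk]
  exact eventually_constant_sum (fun q hq => by rw [choose_eq_zero_of_lt (by omega), zero_mul])
    (by omega)

theorem add_choose_mul_add_choose {N : ℕ} (a b k : ℕ) (hN : min a b < N) :
    (k + a).choose a * (k + b).choose b =
      ∑ i ∈ range N, a.choose i * b.choose i * (k + a + b - i).choose (a + b) := by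
  have hvanish : ∀ i ≥ min a b + 1,
      a.choose i * b.choose i * (k + a + b - i).choose (a + b) = 0 := by
    intro i hi
    obtain h | h : a < i ∨ b < i := by omega
    all_goals simp [choose_eq_zero_of_lt h]
  rw [eventually_constant_sum hvanish hN,
    ← eventually_constant_sum hvanish (by omega : min a b + 1 ≤ b + 1)]
  calc (k + a).choose a * (k + b).choose b
      = ∑ q ∈ range (b + 1),
          (k + a).choose (a + b - q) * b.choose q * (a + b - q).choose a := by
        have hvandermonde := add_choose_add_eq_sum_range k 0 (le_refl b)
        rw [zero_add, add_comm b] at hvandermonde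
        rw [hvandermonde, mul_sum]
        refine sum_congr rfl fun q hq => ?_
        have hq : q ≤ b := mem_range_succ_iff.mp hq
        rw [mul_right_comm ((k + a).choose _), choose_mul (by omega), Nat.add_sub_cancel,
          show a + b - q - a = b - q by omega]
        ring
    _ = ∑ q ∈ range (b + 1), (k + a).choose (a + b - q) * b.choose q *
          ∑ i ∈ range (b + 1), a.choose i * (b - q).choose i := by
        refine sum_congr rfl fun q hq => ?_
        have hq : q ≤ b := mem_range_succ_iff.mp hq
        rw [sum_range_choose_mul_choose _ (by omega), ← choose_symm_add,
          show a + (b - q) = a + b - q by omega]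
    _ = ∑ i ∈ range (b + 1), ∑ q ∈ range (b + 1),
          a.choose i * b.choose i * ((b - i).choose q * (k + a).choose (a + b - q)) := by
        simp only [mul_sum]
        rw [sum_comm]
        refine sum_congr rfl fun i _ => sum_congr rfl fun q _ => ?_
        linear_combination (k + a).choose (a + b - q) * a.choose i *
          (choose_mul_choose_sub_comm b i q).symm
    _ = _ := by
        refine sum_congr rfl fun i hi => ?_
        have hi : i ≤ b := mem_range_succ_iff.mp hi
        rw [← mul_sum, show k + a + b - i = (b - i) + (k + a) by omega,
          add_choose_add_eq_sum_range _ _ (Nat.sub_le b i)]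

end Nat

theorem Set.ncard_setOf_sum_eq (α : Type*) [Fintype α] (k : ℕ) :
    {P : α → ℕ | ∑ i, P i = k}.ncard = (Fintype.card α + k - 1).choose k := by
  classical
  rw [← _root_.Nat.card_coe_set_eq, ← Nat.card_eq_fintype_card, ← Sym.natCard_sym_eq_choose]
  exact Nat.card_congr (Sym.equivNatSumOfFintype α k).symm

namespace Fin

variable {M : Type*} [AddCommMonoid M] {m n : ℕ}

theorem sum_ite_val_lt (x : Fin (m + n) → M) :
    (∑ j : Fin (m + n), if (j : ℕ) < m then x j else 0) = ∑ i : Fin m, x (castAdd n i) := by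
  simp [sum_univ_add]

theorem sum_ite_le_val (x : Fin (m + n) → M) :
    (∑ j : Fin (m + n), if m ≤ (j : ℕ) then x j else 0) = ∑ i : Fin n, x (natAdd m i) := by
  simp [sum_univ_add, fun i : Fin m => i.is_lt.not_ge]

end Fin

theorem ncard_setOf_sum_lt_eq_and_sum_ge_eq (m n k : ℕ) :
    {x : Fin (m + n) → ℕ |
        (∑ j : Fin (m + n), if (j : ℕ) < m then x j else 0) = k ∧
        (∑ j : Fin (m + n), if m ≤ (j : ℕ) then x j else 0) = k}.ncard =
      (m + k - 1).choose k * (n + k - 1).choose k := by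
  have hsplit : {x : Fin (m + n) → ℕ |
        (∑ j : Fin (m + n), if (j : ℕ) < m then x j else 0) = k ∧
        (∑ j : Fin (m + n), if m ≤ (j : ℕ) then x j else 0) = k} =
      Fin.appendEquiv m n '' ({f | ∑ i, f i = k} ×ˢ {g | ∑ i, g i = k}) := by
    ext x
    simp [Equiv.image_eq_preimage_symm, Fin.sum_ite_val_lt, Fin.sum_ite_le_val]
  rw [hsplit, Set.ncard_image_of_injective _ (Equiv.injective _), Set.ncard_prod,
    Set.ncard_setOf_sum_eq, Set.ncard_setOf_sum_eq, Fintype.card_fin, Fintype.card_fin]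

theorem stmt_7 (m n k : ℕ) (hm : 1 ≤ m) (hn : 1 ≤ n) :
    Set.ncard {x : Fin (m + n) → ℕ |
        (∑ j : Fin (m + n), if (j : ℕ) < m then x j else 0) = k ∧
        (∑ j : Fin (m + n), if m ≤ (j : ℕ) then x j else 0) = k} =
      (k + m - 1).choose (m - 1) * (k + n - 1).choose (n - 1) ∧
    (k + m - 1).choose (m - 1) * (k + n - 1).choose (n - 1) =
      ∑ i ∈ Finset.range (min m n + 1),
        (m - 1).choose i * (n - 1).choose i * (k + m + n - 2 - i).choose (m + n - 2) := by
  obtain ⟨a, rfl⟩ := Nat.exists_eq_add_of_le' hm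
  obtain ⟨b, rfl⟩ := Nat.exists_eq_add_of_le' hn
  have hshift : ∀ i, k + (a + 1) + (b + 1) - 2 - i = k + a + b - i := fun i => by omega
  rw [show k + (a + 1) - 1 = k + a by omega, show k + (b + 1) - 1 = k + b by omega,
    Nat.add_sub_cancel, Nat.add_sub_cancel, show a + 1 + (b + 1) - 2 = a + b by omega]
  simp only [hshift]
  refine ⟨?_, Nat.add_choose_mul_add_choose a b k (by omega)⟩
  rw [ncard_setOf_sum_lt_eq_and_sum_ge_eq, show a + 1 + k - 1 = k + a by omega,
    show b + 1 + k - 1 = k + b by omega, Nat.choose_symm_add, Nat.choose_symm_add]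
end

section
/- Let $n \ge 3$ and $0 \le r \le n$, and let $(h_0, h_1, \ldots, h_s)$ with $h_0 = 1$, $h_1 = (n-1)^2 - r$, $h_i = \binom{n-1}{i}^2$ for $2 \le i \le n$, where $s$ is the largest index with $h_s \ne 0$, namely $s = n-1$. Then $\widetilde{e} := \sum_{j=0}^{s-1}\big((h_s + \cdots + h_{s-j}) - (h_0 + \cdots + h_j)\big) = r(n-3)$. -/
open Finset

theorem stmt_8 (n r : ℕ) (hn : 3 ≤ n) (hr : r ≤ n)
    (h : ℕ → ℤ)
    (hh0 : h 0 = 1)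
    (hh1 : h 1 = ((n : ℤ) - 1) ^ 2 - r)
    (hhi : ∀ i, 2 ≤ i → h i = ((n - 1).choose i : ℤ) ^ 2) :
    (∑ j ∈ Finset.range (n - 1),
        ((∑ l ∈ Finset.Icc (n - 1 - j) (n - 1), h l) - (∑ l ∈ Finset.range (j + 1), h l))) =
      (r : ℤ) * ((n : ℤ) - 3) := by
  set s := n - 1 with hs
  have hs2 : 2 ≤ s := by omega
  have hcast : ((s : ℤ)) = (n : ℤ) - 1 := by
    rw [hs]; push_cast [Nat.cast_sub (by omega : 1 ≤ n)]; ring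
  -- reflection of the Icc sum
  have refl : ∀ j, j ≤ s → ∑ l ∈ Finset.Icc (s - j) s, h l
      = ∑ i ∈ Finset.range (j + 1), h (s - i) := by
    intro j hj
    apply Finset.sum_nbij' (i := fun l => s - l) (j := fun i => s - i)
    · intro a ha
      simp only [Finset.mem_Icc] at ha
      simp only [Finset.mem_range]
      omega
    · intro a ha
      simp only [Finset.mem_range] at ha
      simp only [Finset.mem_Icc]
      omega
    · intro a ha
      simp only [Finset.mem_Icc] at ha
      omega
    · intro a ha
      simp only [Finset.mem_range] at ha
      omega
    · intro a ha
      simp only [Finset.mem_Icc] at ha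
      congr 1
      omega
  -- pointwise value of the difference
  have key : ∀ i, i < s → h (s - i) - h i
      = (if i = 1 then (r : ℤ) else 0) - (if i = s - 1 then (r : ℤ) else 0) := by
    intro i hi
    rcases Nat.lt_or_ge i 2 with h2 | h2
    · interval_cases i
      · have h1 : (0 : ℕ) ≠ 1 := by omega
        have h2' : (0 : ℕ) ≠ s - 1 := by omega
        rw [Nat.sub_zero, hhi s hs2, hh0, Nat.choose_self, if_neg h1, if_neg h2']
        norm_num
      · by_cases hse : s = 2
        · have : s - 1 = 1 := by omega
          rw [hse]; norm_num
        · have hs3 : 3 ≤ s := by omega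
          have hne : (1 : ℕ) ≠ s - 1 := by omega
          rw [if_pos rfl, if_neg hne, hhi (s - 1) (by omega), hh1]
          have : s.choose (s - 1) = s := by
            rw [← Nat.choose_symm (by omega : s - 1 ≤ s),
              Nat.sub_sub_self (by omega : 1 ≤ s), Nat.choose_one_right]
          rw [hs] at this ⊢
          rw [this]
          push_cast [Nat.cast_sub (by omega : 1 ≤ n)]
          ring
    · by_cases hie : i = s - 1
      · subst hie
        have : s - (s - 1) = 1 := by omega
        rw [this, hh1, hhi (s - 1) (by omega), if_neg (by omega : s - 1 ≠ 1), if_pos rfl]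
        have hc : s.choose (s - 1) = s := by
          rw [← Nat.choose_symm (by omega : s - 1 ≤ s),
            Nat.sub_sub_self (by omega : 1 ≤ s), Nat.choose_one_right]
        rw [hs] at hc ⊢
        rw [hc]
        push_cast [Nat.cast_sub (by omega : 1 ≤ n)]
        ring
      · have hgi : 2 ≤ s - i := by omega
        rw [hhi i h2, hhi (s - i) hgi, if_neg (by omega : i ≠ 1), if_neg hie]
        rw [Nat.choose_symm (by omega : i ≤ s)]
        ring
  -- main computation
  calc (∑ j ∈ Finset.range s,
        ((∑ l ∈ Finset.Icc (s - j) s, h l) - (∑ l ∈ Finset.range (j + 1), h l)))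
      = ∑ j ∈ Finset.range s, ∑ i ∈ Finset.range (j + 1), (h (s - i) - h i) := by
        apply Finset.sum_congr rfl
        intro j hj
        rw [Finset.mem_range] at hj
        rw [refl j (by omega), Finset.sum_sub_distrib]
    _ = ∑ j ∈ Finset.range s,
          ((if 1 ∈ Finset.range (j + 1) then (r : ℤ) else 0)
           - (if s - 1 ∈ Finset.range (j + 1) then (r : ℤ) else 0)) := by
        apply Finset.sum_congr rfl
        intro j hj
        rw [Finset.mem_range] at hj
        rw [show ∑ i ∈ Finset.range (j + 1), (h (s - i) - h i)
            = ∑ i ∈ Finset.range (j + 1),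
              ((if i = 1 then (r : ℤ) else 0) - (if i = s - 1 then (r : ℤ) else 0)) from
          Finset.sum_congr rfl (fun i hi => key i (by
            rw [Finset.mem_range] at hi; omega))]
        rw [Finset.sum_sub_distrib, Finset.sum_ite_eq', Finset.sum_ite_eq']
    _ = (∑ j ∈ Finset.range s, (if 1 ≤ j then (r : ℤ) else 0))
        - (∑ j ∈ Finset.range s, (if j = s - 1 then (r : ℤ) else 0)) := by
        rw [← Finset.sum_sub_distrib]
        apply Finset.sum_congr rfl
        intro j hj
        rw [Finset.mem_range] at hj
        congr 1
        · simp only [Finset.mem_range]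
          congr 1
          simp only [eq_iff_iff]
          omega
        · simp only [Finset.mem_range]
          congr 1
          simp only [eq_iff_iff]
          omega
    _ = (r : ℤ) * ((s : ℤ) - 1) - (r : ℤ) := by
        congr 1
        · rw [Finset.sum_ite, Finset.sum_const, Finset.sum_const_zero]
          have : Finset.filter (fun j => 1 ≤ j) (Finset.range s) = Finset.Ico 1 s := by
            ext x; simp only [Finset.mem_filter, Finset.mem_range, Finset.mem_Ico]; omega
          rw [this, Nat.card_Ico, nsmul_eq_mul, add_zero]
          push_cast [Nat.cast_sub (by omega : 1 ≤ s)]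
          ring
        · rw [Finset.sum_ite_eq' (Finset.range s) (s - 1) (fun _ => (r : ℤ))]
          rw [if_pos (by simp only [Finset.mem_range]; omega)]
    _ = (r : ℤ) * ((n : ℤ) - 3) := by rw [hcast]; ring
end

section
/- Let $G$ be a finite simple graph on vertex set $\{1,\ldots,d\}$ with a perfect matching, let $T$ be an independent set of $G$, and suppose there exists an edge $f \in E(G)$ with $f \not\subseteq T \cup N_G(T)$ or $f$ having both endpoints in $N_G(T)$ (i.e., $f$ is not an edge between $T$ and $N_G(T)$) and $f \cap N_G(T) \ne \emptyset$. If $f$ is contained in some perfect matching $M$ of $G$, then the vector $v_M = \sum_{e \in M} (\mathbf{e}_i + \mathbf{e}_j)$ (summing over edges $e=\{i,j\} \in M$), which equals $(1,\ldots,1)$, satisfies $\sum_{j \in N_G(T)} (v_M)_j > \sum_{i \in T} (v_M)_i$, i.e., $|N_G(T)| > |T|$. -/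
open Finset

theorem stmt_9 (d : ℕ) (G : SimpleGraph (Fin d)) [DecidableRel G.Adj]
    (T : Finset (Fin d)) (hind : ∀ v ∈ T, ∀ w ∈ T, ¬ G.Adj v w)
    (N : Finset (Fin d)) (hN : N = Finset.univ.filter (fun w => ∃ v ∈ T, G.Adj v w))
    (a b : Fin d) (hab : G.Adj a b)
    (hfnotB : ¬ ((a ∈ T ∧ b ∈ N) ∨ (b ∈ T ∧ a ∈ N)))
    (hfN : a ∈ N ∨ b ∈ N)
    (M : G.Subgraph) (hM : M.IsPerfectMatching) (hfM : M.Adj a b)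
    (vM : Fin d → ℕ)
    (hvM : ∀ v : Fin d, vM v = {e ∈ M.edgeSet | v ∈ e}.ncard) :
    (∀ v : Fin d, vM v = 1) ∧ (∑ i ∈ T, vM i) < ∑ j ∈ N, vM j ∧ T.card < N.card := by
  classical
  have hmatch : ∀ v : Fin d, ∃! w, M.Adj v w := fun v => hM.1 (hM.2 v)
  choose f hf huniq using hmatch
  -- the set of edges through v is exactly {s(v, f v)}
  have hset : ∀ v : Fin d, {e ∈ M.edgeSet | v ∈ e} = {s(v, f v)} := by
    intro v
    ext e
    induction e using Sym2.ind with
    | _ x y =>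
      simp only [Set.mem_setOf_eq, SimpleGraph.Subgraph.mem_edgeSet, Sym2.mem_iff,
        Set.mem_singleton_iff, Sym2.eq_iff]
      constructor
      · rintro ⟨he, rfl | rfl⟩
        · exact Or.inl ⟨rfl, huniq v y he⟩
        · exact Or.inr ⟨huniq v x he.symm, rfl⟩
      · rintro (⟨rfl, rfl⟩ | ⟨rfl, rfl⟩)
        · exact ⟨hf x, Or.inl rfl⟩
        · exact ⟨(hf y).symm, Or.inr rfl⟩
  have h1 : ∀ v : Fin d, vM v = 1 := by
    intro v; rw [hvM v, hset v, Set.ncard_singleton]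
  -- the matched partner lands in N
  have hmaps : ∀ t ∈ T, f t ∈ N := by
    intro t ht
    rw [hN, Finset.mem_filter]
    exact ⟨Finset.mem_univ _, t, ht, M.adj_sub (hf t)⟩
  have hinj : Set.InjOn f T := by
    intro t1 ht1 t2 ht2 h
    have e1 : t1 = f (f t1) := huniq (f t1) t1 (hf t1).symm
    have e2 : t2 = f (f t2) := huniq (f t2) t2 (hf t2).symm
    rw [e1, e2, h]
  -- a missed element of N
  obtain ⟨c, hcN, hcmiss⟩ : ∃ c ∈ N, ∀ t ∈ T, f t ≠ c := by
    rcases hfN with ha | hb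
    · refine ⟨a, ha, fun t ht heq => ?_⟩
      subst heq
      have : b = t := by
        have h1' : t = f (f t) := huniq (f t) t (hf t).symm
        have h2' : b = f (f t) := huniq (f t) b hfM
        rw [h2', ← h1']
      exact hfnotB (Or.inr ⟨this ▸ ht, ha⟩)
    · refine ⟨b, hb, fun t ht heq => ?_⟩
      subst heq
      have : a = t := by
        have h1' : t = f (f t) := huniq (f t) t (hf t).symm
        have h2' : a = f (f t) := huniq (f t) a hfM.symm
        rw [h2', ← h1']
      exact hfnotB (Or.inl ⟨this ▸ ht, hb⟩)
  have hcard : T.card < N.card := by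
    have hle : T.card ≤ (N.erase c).card := by
      apply Finset.card_le_card_of_injOn f
      · intro t ht
        exact Finset.mem_erase.2 ⟨hcmiss t ht, hmaps t ht⟩
      · exact fun x hx y hy => hinj (by simpa using hx) (by simpa using hy)
    exact lt_of_le_of_lt hle (Finset.card_erase_lt_of_mem hcN)
  refine ⟨h1, ?_, hcard⟩
  simp only [h1, Finset.sum_const, smul_eq_mul, mul_one]
  exact hcard
end

section
/- Let $G$ be a matching-covered connected finite simple non-bipartite graph and let $T$ be an independent set of $G$. Then $|N_G(T)| > |T|$. -/
open Finset

theorem stmt_10 {V : Type*} [Fintype V] [DecidableEq V]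
    (G : SimpleGraph V) [DecidableRel G.Adj] (hconn : G.Connected)
    (hmc : ∀ e ∈ G.edgeSet, ∃ M : G.Subgraph, M.IsPerfectMatching ∧ e ∈ M.edgeSet)
    (hnb : ¬ G.Colorable 2)
    (T : Finset V) (hTne : T.Nonempty)
    (hind : ∀ v ∈ T, ∀ w ∈ T, ¬ G.Adj v w) :
    T.card < (Finset.univ.filter (fun w => ∃ v ∈ T, G.Adj v w)).card := by
  classical
  set N : Finset V := Finset.univ.filter (fun w => ∃ v ∈ T, G.Adj v w) with hNdef
  by_cases hf : ∃ x y, G.Adj x y ∧ x ∈ N ∧ y ∉ T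
  · obtain ⟨x, y, hxy, hxN, hyT⟩ := hf
    obtain ⟨M, hM, hfM⟩ := hmc s(x, y) (by rwa [SimpleGraph.mem_edgeSet])
    have hMxy : M.Adj x y := by rwa [SimpleGraph.Subgraph.mem_edgeSet] at hfM
    have hpart : ∀ v : V, ∃! w, M.Adj v w := fun v => hM.1 (hM.2 v)
    let p : V → V := fun v => (hpart v).exists.choose
    have hp : ∀ v, M.Adj v (p v) := fun v => (hpart v).exists.choose_spec
    have hpu : ∀ v w, M.Adj v w → w = p v := fun v w h => (hpart v).unique h (hp v)
    have hpx : p x = y := (hpu x y hMxy).symm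
    have hinj : Set.InjOn p T := by
      intro a ha b hb hab
      have h1 : M.Adj (p a) a := (hp a).symm
      have h2 : M.Adj (p a) b := by rw [hab]; exact (hp b).symm
      exact (hpu _ _ h1).trans (hpu _ _ h2).symm
    have hmaps : ∀ a ∈ T, p a ∈ N.erase x := by
      intro a ha
      refine Finset.mem_erase.2 ⟨?_, ?_⟩
      · intro h
        have hxa : M.Adj x a := by rw [← h]; exact (hp a).symm
        have := hpu x a hxa
        rw [hpx] at this
        exact hyT (this ▸ ha)
      · simp only [hNdef, Finset.mem_filter, Finset.mem_univ, true_and]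
        exact ⟨a, ha, M.adj_sub (hp a)⟩
    calc T.card ≤ (N.erase x).card :=
          Finset.card_le_card_of_injOn p hmaps hinj
      _ < N.card := Finset.card_erase_lt_of_mem hxN
  · exfalso
    apply hnb
    push_neg at hf
    have step : ∀ u w : V, G.Adj u w → (u ∈ T ∨ u ∈ N) → (w ∈ T ∨ w ∈ N) := by
      intro u w huw hu
      rcases hu with hu | hu
      · right
        simp only [hNdef, Finset.mem_filter, Finset.mem_univ, true_and]
        exact ⟨u, hu, huw⟩
      · left; exact hf u w huw hu
    have key : ∀ (a b : V) (q : G.Walk a b), (a ∈ T ∨ a ∈ N) → (b ∈ T ∨ b ∈ N) := by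
      intro a b q
      induction q with
      | nil => exact id
      | cons h q ih => intro ha; exact ih (step _ _ h ha)
    have htot : ∀ v : V, v ∈ T ∨ v ∈ N := by
      obtain ⟨t, ht⟩ := hTne
      intro v
      obtain ⟨w⟩ := hconn t v
      exact key t v w (Or.inl ht)
    refine ⟨⟨fun v => if v ∈ T then 0 else 1, ?_⟩⟩
    intro v w hvw
    by_cases hv : v ∈ T
    · have hw : w ∉ T := fun hw => hind v hv w hw hvw
      simp [hv, hw]
    · have hvN : v ∈ N := (htot v).resolve_left hv
      have hw : w ∈ T := hf v w hvw hvN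
      simp [hv, hw]
end

section
/- For integers $n \ge 3$ and $1 \le r \le n$, consider the graph $G_{n,n,r}$ ($K_{n,n}$ minus a matching of size $r$, with parts $V_1 = [n]$ and $V_2 = \{n+1,\ldots,2n\}$, missing edges $\{i, n+i\}$ for $1 \le i \le r$). For each $i \in [r]$ and $j \in \{1,\ldots,n-2\}$, the vector $v_{i,j} \in \mathbb{Z}^{2n}$ with value $j$ at coordinates $i$ and $n+i$ and value $1$ elsewhere lies in the affine semigroup $S = \mathbb{Z}_{\ge 0}\{\mathbf{e}_a + \mathbf{e}_b : \{a,b\} \in E(G_{n,n,r})\}$. -/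
open Finset

/-- The graph `G_{n,n,r}`: the complete bipartite graph `K_{n,n}` on vertex set
`{0,…,2n-1}` with parts `{0,…,n-1}` and `{n,…,2n-1}`, minus the matching
consisting of the edges `{i, n+i}` for `0 ≤ i < r`. -/
def Gnnr (n r : ℕ) : SimpleGraph (Fin (n + n)) :=
  SimpleGraph.fromRel (fun a b =>
    (a : ℕ) < n ∧ n ≤ (b : ℕ) ∧ ¬ ((a : ℕ) < r ∧ (b : ℕ) = n + (a : ℕ)))

namespace Stmt13Aux

variable {n : ℕ}

lemma mod2 {y : ℕ} (hn : 0 < n) (h : y < n + n) : y % n = if y < n then y else y - n := by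
  split_ifs with h1
  · exact Nat.mod_eq_of_lt h1
  · rw [Nat.mod_eq_sub_mod (le_of_not_gt h1), Nat.mod_eq_of_lt (by omega)]

def vL (hn : 0 < n) (x : ℕ) : Fin (n + n) := ⟨x % n, by have := Nat.mod_lt x hn; omega⟩
def vR (hn : 0 < n) (x : ℕ) : Fin (n + n) := ⟨n + x % n, by have := Nat.mod_lt x hn; omega⟩

noncomputable def Lf (hn : 0 < n) (x : ℕ) : Fin (n + n) → ℤ := Pi.single (vL hn x) 1
noncomputable def Rf (hn : 0 < n) (x : ℕ) : Fin (n + n) → ℤ := Pi.single (vR hn x) 1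

lemma vL_mod (hn : 0 < n) (x : ℕ) : vL hn (x % n) = vL hn x :=
  Fin.ext (by simp only [vL]; rw [Nat.mod_mod_of_dvd x dvd_rfl])

lemma vR_mod (hn : 0 < n) (x : ℕ) : vR hn (x % n) = vR hn x :=
  Fin.ext (by simp only [vR]; rw [Nat.mod_mod_of_dvd x dvd_rfl])

lemma Lf_mod (hn : 0 < n) (x : ℕ) : Lf hn (x % n) = Lf hn x := by
  unfold Lf; rw [vL_mod]

lemma Rf_mod (hn : 0 < n) (x : ℕ) : Rf hn (x % n) = Rf hn x := by
  unfold Rf; rw [vR_mod]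

lemma edge_mem (r : ℕ) (hn : 0 < n) {a b : ℕ} (hab : a % n ≠ b % n) :
    Lf hn a + Rf hn b ∈ AddSubmonoid.closure
      {x : Fin (n + n) → ℤ | ∃ u v : Fin (n + n), (Gnnr n r).Adj u v ∧
        x = Pi.single u 1 + Pi.single v 1} := by
  apply AddSubmonoid.subset_closure
  refine ⟨vL hn a, vR hn b, ?_, rfl⟩
  have ha := Nat.mod_lt a hn
  have hb := Nat.mod_lt b hn
  rw [Gnnr, SimpleGraph.fromRel_adj]
  constructor
  · intro h
    have : (vL hn a : ℕ) = (vR hn b : ℕ) := by rw [h]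
    simp only [vL, vR] at this
    omega
  · left
    refine ⟨ha, by simp [vR], ?_⟩
    simp only [vL, vR]
    rintro ⟨h1, h2⟩
    exact hab (by omega)

lemma shift_sum {M : Type*} [AddCommMonoid M] (hn : 0 < n) {p : ℕ} (hp : p < n) (f : ℕ → M)
    (hf : ∀ x, f (x % n) = f x) :
    ∑ k ∈ Ioc 0 (n - 1), f (p + k) = ∑ x ∈ (range n).erase p, f x := by
  refine Finset.sum_nbij' (fun k => (p + k) % n)
    (fun x => if p < x then x - p else x + n - p) ?_ ?_ ?_ ?_ ?_
  · intro k hk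
    simp only [mem_Ioc] at hk
    simp only [mem_erase, mem_range]
    rw [mod2 hn (by omega)]
    split_ifs <;> omega
  · intro x hx
    simp only [mem_erase, mem_range] at hx
    simp only [mem_Ioc]
    split_ifs <;> omega
  · intro k hk
    simp only [mem_Ioc] at hk
    rw [mod2 hn (by omega)]
    split_ifs <;> omega
  · intro x hx
    simp only [mem_erase, mem_range] at hx
    split_ifs with h <;> rw [mod2 hn (by omega)] <;> split_ifs <;> omega
  · intro k hk
    exact (hf (p + k)).symm

lemma reindex_sub {M : Type*} [AddCommMonoid M] (a b : ℕ) (f : ℕ → M) :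
    ∑ k ∈ Icc (a + 1) (b + 1), f (k - 1) = ∑ k ∈ Icc a b, f k := by
  refine Finset.sum_nbij' (fun k => k - 1) (fun k => k + 1) ?_ ?_ ?_ ?_ ?_ <;>
    intro x hx <;> simp only [mem_Icc] at hx ⊢ <;> try omega

end Stmt13Aux

open Stmt13Aux

theorem stmt_13 (n r : ℕ) (hn : 3 ≤ n) (hr1 : 1 ≤ r) (hr2 : r ≤ n)
    (i j : ℕ) (hi1 : 1 ≤ i) (hi2 : i ≤ r) (hj1 : 1 ≤ j) (hj2 : j ≤ n - 2) :
    (fun a : Fin (n + n) => if (a : ℕ) = i - 1 ∨ (a : ℕ) = n + i - 1 then (j : ℤ) else 1)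
      ∈ AddSubmonoid.closure
          {x : Fin (n + n) → ℤ | ∃ a b : Fin (n + n), (Gnnr n r).Adj a b ∧
            x = Pi.single a 1 + Pi.single b 1} := by
  have hn0 : 0 < n := by omega
  set p := i - 1 with hpdef
  have hpn : p < n := by omega
  set C := AddSubmonoid.closure
          {x : Fin (n + n) → ℤ | ∃ a b : Fin (n + n), (Gnnr n r).Adj a b ∧
            x = Pi.single a 1 + Pi.single b 1} with hC
  set S1 : Fin (n + n) → ℤ := ∑ k ∈ Icc 1 j, (Lf hn0 p + Rf hn0 (p + k)) with hS1
  set S2 : Fin (n + n) → ℤ := ∑ k ∈ Icc 2 (j + 1), (Lf hn0 (p + k) + Rf hn0 p) with hS2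
  set S3 : Fin (n + n) → ℤ :=
    ∑ k ∈ Icc (j + 2) (n - 1), (Lf hn0 (p + k) + Rf hn0 (p + (k - 1))) with hS3
  set S4 : Fin (n + n) → ℤ := Lf hn0 (p + 1) + Rf hn0 (p + (n - 1)) with hS4
  have hpp : p % n = p := Nat.mod_eq_of_lt hpn
  have m1 : S1 ∈ C := by
    refine AddSubmonoid.sum_mem _ fun k hk => edge_mem r hn0 ?_
    simp only [mem_Icc] at hk
    rw [hpp, mod2 hn0 (by omega)]; split_ifs <;> omega
  have m2 : S2 ∈ C := by
    refine AddSubmonoid.sum_mem _ fun k hk => edge_mem r hn0 ?_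
    simp only [mem_Icc] at hk
    rw [hpp, mod2 hn0 (by omega)]; split_ifs <;> omega
  have m3 : S3 ∈ C := by
    refine AddSubmonoid.sum_mem _ fun k hk => edge_mem r hn0 ?_
    simp only [mem_Icc] at hk
    rw [mod2 hn0 (by omega), mod2 hn0 (by omega)]; split_ifs <;> omega
  have m4 : S4 ∈ C := by
    refine edge_mem r hn0 ?_
    rw [mod2 hn0 (by omega), mod2 hn0 (by omega)]; split_ifs <;> omega
  have hA : Lf hn0 (p + 1) + (∑ k ∈ Icc 2 (j + 1), Lf hn0 (p + k)
      + ∑ k ∈ Icc (j + 2) (n - 1), Lf hn0 (p + k))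
      = ∑ k ∈ Ioc 0 (n - 1), Lf hn0 (p + k) := by
    rw [show Icc 2 (j + 1) = Ioc 1 (j + 1) from Finset.Icc_add_one_left_eq_Ioc 1 (j + 1),
      show Icc (j + 2) (n - 1) = Ioc (j + 1) (n - 1) from Finset.Icc_add_one_left_eq_Ioc (j + 1) (n - 1),
      Finset.sum_Ioc_consecutive _ (by omega) (by omega)]
    have h1 : Lf hn0 (p + 1) = ∑ k ∈ Ioc 0 1, Lf hn0 (p + k) := by
      rw [show (1 : ℕ) = 0 + 1 from rfl, Finset.sum_Ioc_succ_top (by omega)]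
      simp
    rw [h1, Finset.sum_Ioc_consecutive _ (by omega) (by omega)]
  have hB : ∑ k ∈ Icc 1 j, Rf hn0 (p + k)
      + (∑ k ∈ Icc (j + 2) (n - 1), Rf hn0 (p + (k - 1)) + Rf hn0 (p + (n - 1)))
      = ∑ k ∈ Ioc 0 (n - 1), Rf hn0 (p + k) := by
    have h2 : ∑ k ∈ Icc (j + 2) (n - 1), Rf hn0 (p + (k - 1))
        = ∑ k ∈ Icc (j + 1) (n - 2), Rf hn0 (p + k) := by
      rw [show n - 1 = (n - 2) + 1 by omega, show j + 2 = (j + 1) + 1 from rfl]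
      exact reindex_sub (j + 1) (n - 2) (fun k => Rf hn0 (p + k))
    rw [h2, show Icc 1 j = Ioc 0 j from Finset.Icc_add_one_left_eq_Ioc 0 j,
      show Icc (j + 1) (n - 2) = Ioc j (n - 2) from Finset.Icc_add_one_left_eq_Ioc j (n - 2),
      show Rf hn0 (p + (n - 1)) = Rf hn0 (p + ((n - 2) + 1)) by rw [show (n-2)+1 = n-1 by omega],
      ← add_assoc, Finset.sum_Ioc_consecutive _ (by omega) (by omega),
      ← Finset.sum_Ioc_succ_top (show (0:ℕ) ≤ n - 2 by omega) (fun k => Rf hn0 (p + k)),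
      show (n - 2) + 1 = n - 1 by omega]
  have key : S1 + S2 + S3 + S4
      = j • Lf hn0 p + j • Rf hn0 p
        + (∑ x ∈ (range n).erase p, Lf hn0 x + ∑ x ∈ (range n).erase p, Rf hn0 x) := by
    rw [hS1, hS2, hS3, hS4,
      Finset.sum_add_distrib, Finset.sum_add_distrib, Finset.sum_add_distrib,
      Finset.sum_const, Finset.sum_const, Nat.card_Icc, Nat.card_Icc,
      show j + 1 - 1 = j by omega, show j + 1 + 1 - 2 = j by omega,
      ← shift_sum hn0 hpn (Lf hn0) (Lf_mod hn0),
      ← shift_sum hn0 hpn (Rf hn0) (Rf_mod hn0),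
      ← hA, ← hB]
    abel
  have hT : (fun a : Fin (n + n) => if (a : ℕ) = i - 1 ∨ (a : ℕ) = n + i - 1 then (j : ℤ) else 1)
      = j • Lf hn0 p + j • Rf hn0 p
        + (∑ x ∈ (range n).erase p, Lf hn0 x + ∑ x ∈ (range n).erase p, Rf hn0 x) := by
    funext a
    have ha2 : (a : ℕ) < n + n := a.isLt
    simp only [Pi.add_apply, Pi.smul_apply, Finset.sum_apply]
    simp only [Lf, Rf, Pi.single_apply, nsmul_eq_mul, Fin.ext_iff, vL, vR, hpp]
    have e1 : ∑ x ∈ (range n).erase p, (if (a : ℕ) = x % n then (1 : ℤ) else 0)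
        = if (a : ℕ) ∈ (range n).erase p then (1 : ℤ) else 0 := by
      rw [Finset.sum_congr rfl (fun x hx => by
        rw [Nat.mod_eq_of_lt (mem_range.1 (mem_of_mem_erase hx))]),
        Finset.sum_ite_eq]
    have e2 : ∑ x ∈ (range n).erase p, (if (a : ℕ) = n + x % n then (1 : ℤ) else 0)
        = if n ≤ (a : ℕ) ∧ ((a : ℕ) - n) ∈ (range n).erase p then (1 : ℤ) else 0 := by
      by_cases hna : n ≤ (a : ℕ)
      · simp only [hna, true_and]
        have step : ∀ x ∈ (range n).erase p,
            (if (a : ℕ) = n + x % n then (1 : ℤ) else 0)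
              = (if (a : ℕ) - n = x then (1 : ℤ) else 0) := by
          intro x hx
          rw [Nat.mod_eq_of_lt (mem_range.1 (mem_of_mem_erase hx))]
          exact if_congr (by constructor <;> omega) rfl rfl
        rw [Finset.sum_congr rfl step, Finset.sum_ite_eq]
      · rw [Finset.sum_eq_zero (fun x hx => by
          rw [if_neg]
          have := Nat.mod_lt x hn0
          omega)]
        rw [if_neg (by omega)]
    rw [e1, e2]
    simp only [mem_erase, mem_range]
    split_ifs <;>
      first
        | omega
        | (simp only [mul_one, mul_zero, add_zero, zero_add]; omega)
        | (simp only [mul_one, mul_zero, add_zero, zero_add])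
  rw [hT, ← key]
  exact add_mem (add_mem (add_mem m1 m2) m3) m4
end

section
/- Let $m, n \ge 3$, $0 \le r \le \min\{m,n\}$, and let $G_{m,n,r}$ be $K_{m,n}$ minus the matching $\{\{i,m+i\}: 1 \le i \le r\}$ with parts $V_1=[m]$, $V_2=\{m+1,\ldots,m+n\}$. A nonempty subset $T \subseteq V_1$ satisfies both (a) the bipartite graph $B(T)$ on $T \cup N(T)$ with edges of $G_{m,n,r}$ between $T$ and $N(T)$ is connected, and (b) $G_{m,n,r} \setminus (T \cup N(T))$ is connected with at least one edge, if and only if $T = \{i\}$ for some $i \in \{1, \ldots, r\}$. -/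
open Finset

/-- The graph `G_{m,n,r}`: the complete bipartite graph `K_{m,n}` on vertex set
`{0,…,m+n-1}` with parts `{0,…,m-1}` and `{m,…,m+n-1}`, minus the matching
consisting of the edges `{i, m+i}` for `0 ≤ i < r`. -/
def Gmnr (m n r : ℕ) : SimpleGraph (Fin (m + n)) :=
  SimpleGraph.fromRel (fun a b =>
    (a : ℕ) < m ∧ m ≤ (b : ℕ) ∧ ¬ ((a : ℕ) < r ∧ (b : ℕ) = m + (a : ℕ)))

lemma gmnr_adj (m n r : ℕ) (a b : Fin (m + n)) :
    (Gmnr m n r).Adj a b ↔ a ≠ b ∧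
      (((a : ℕ) < m ∧ m ≤ (b : ℕ) ∧ ¬ ((a : ℕ) < r ∧ (b : ℕ) = m + (a : ℕ))) ∨
       ((b : ℕ) < m ∧ m ≤ (a : ℕ) ∧ ¬ ((b : ℕ) < r ∧ (a : ℕ) = m + (b : ℕ)))) := by
  simp [Gmnr, SimpleGraph.fromRel_adj]

lemma star_connected {V : Type*} (G : SimpleGraph V) (s : Set V) (c : V) (hc : c ∈ s)
    (h : ∀ v ∈ s, v = c ∨ G.Adj c v) : (G.induce s).Connected := by
  rw [SimpleGraph.connected_iff]
  have key : ∀ w : s, (G.induce s).Reachable ⟨c, hc⟩ w := by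
    rintro ⟨w, hw⟩
    rcases h w hw with h1 | h2
    · subst h1
      exact SimpleGraph.Reachable.refl _
    · exact SimpleGraph.Adj.reachable (by exact h2)
  exact ⟨fun u v => (key u).symm.trans (key v), ⟨⟨c, hc⟩⟩⟩

open scoped Classical in
theorem stmt_18 (m n r : ℕ) (hm : 3 ≤ m) (hn : 3 ≤ n) (hr : r ≤ min m n)
    (T : Finset (Fin (m + n))) (hTne : T.Nonempty) (hTsub : ∀ v ∈ T, (v : ℕ) < m)
    (N : Finset (Fin (m + n)))
    (hN : N = Finset.univ.filter (fun w => ∃ v ∈ T, (Gmnr m n r).Adj v w))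
    (BT : SimpleGraph (Fin (m + n)))
    (hBT : BT = SimpleGraph.fromRel (fun a b => (Gmnr m n r).Adj a b ∧ a ∈ T ∧ b ∈ N)) :
    ((BT.induce (↑T ∪ ↑N : Set (Fin (m + n)))).Connected ∧
        ((Gmnr m n r).induce ((↑T ∪ ↑N : Set (Fin (m + n)))ᶜ)).Connected ∧
        (∃ a b, ((Gmnr m n r).induce ((↑T ∪ ↑N : Set (Fin (m + n)))ᶜ)).Adj a b))
      ↔ ∃ i : Fin (m + n), (i : ℕ) < r ∧ T = {i} := by
  have hrm : r ≤ m := hr.trans (min_le_left m n)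
  have hrn : r ≤ n := hr.trans (min_le_right m n)
  constructor
  · rintro ⟨-, -, a, b, hab⟩
    -- if every vertex of V2 lies in N, then the complement has no edge
    have hnotall : ¬ (∀ w : Fin (m + n), m ≤ (w : ℕ) → w ∈ N) := by
      intro hall
      have ha := a.2
      have hb := b.2
      simp only [Set.mem_compl_iff, Set.mem_union, Finset.mem_coe, not_or] at ha hb
      have ham : ((a : Fin (m + n)) : ℕ) < m := by
        by_contra h
        exact ha.2 (hall _ (le_of_not_gt h))
      have hbm : ((b : Fin (m + n)) : ℕ) < m := by
        by_contra h
        exact hb.2 (hall _ (le_of_not_gt h))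
      have hab' : (Gmnr m n r).Adj (↑a) (↑b) := hab
      have := ((gmnr_adj m n r (↑a) (↑b)).1 hab').2
      omega
    -- every element of T has value < r
    have hTr : ∀ t ∈ T, (t : ℕ) < r := by
      intro t ht
      by_contra hge
      apply hnotall
      intro w hw
      rw [hN, Finset.mem_filter]
      refine ⟨Finset.mem_univ _, t, ht, ?_⟩
      rw [gmnr_adj]
      have htm := hTsub t ht
      exact ⟨Fin.ne_of_val_ne (by omega), Or.inl ⟨htm, hw, by omega⟩⟩
    -- T is a singleton
    have huniq : ∀ t₁ ∈ T, ∀ t₂ ∈ T, t₁ = t₂ := by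
      intro t₁ ht₁ t₂ ht₂
      by_contra hne
      have hvne : (t₁ : ℕ) ≠ (t₂ : ℕ) := fun h => hne (Fin.ext h)
      apply hnotall
      intro w hw
      rw [hN, Finset.mem_filter]
      refine ⟨Finset.mem_univ _, ?_⟩
      by_cases hw1 : (w : ℕ) = m + (t₁ : ℕ)
      · refine ⟨t₂, ht₂, ?_⟩
        rw [gmnr_adj]
        exact ⟨Fin.ne_of_val_ne (by have := hTsub t₂ ht₂; omega),
          Or.inl ⟨hTsub t₂ ht₂, hw, by omega⟩⟩
      · refine ⟨t₁, ht₁, ?_⟩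
        rw [gmnr_adj]
        exact ⟨Fin.ne_of_val_ne (by have := hTsub t₁ ht₁; omega),
          Or.inl ⟨hTsub t₁ ht₁, hw, by omega⟩⟩
    obtain ⟨t, ht⟩ := hTne
    refine ⟨t, hTr t ht, ?_⟩
    rw [Finset.eq_singleton_iff_unique_mem]
    exact ⟨ht, fun x hx => huniq x hx t ht⟩
  · rintro ⟨i, hir, hTi⟩
    subst hTi
    have him : (i : ℕ) < m := lt_of_lt_of_le hir hrm
    -- description of N
    have hNmem : ∀ w : Fin (m + n), w ∈ N ↔ (m ≤ (w : ℕ) ∧ (w : ℕ) ≠ m + (i : ℕ)) := by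
      intro w
      rw [hN, Finset.mem_filter]
      constructor
      · rintro ⟨-, v, hv, hadj⟩
        rw [Finset.mem_singleton] at hv
        subst hv
        rcases ((gmnr_adj m n r _ _).1 hadj).2 with ⟨h1, h2, h3⟩ | ⟨h1, h2, h3⟩
        · exact ⟨h2, fun h => h3 ⟨hir, h⟩⟩
        · omega
      · rintro ⟨hw1, hw2⟩
        refine ⟨Finset.mem_univ _, i, Finset.mem_singleton_self i, ?_⟩
        rw [gmnr_adj]
        exact ⟨Fin.ne_of_val_ne (by omega), Or.inl ⟨him, hw1, by omega⟩⟩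
    have hiT : i ∈ ({i} : Finset (Fin (m + n))) := Finset.mem_singleton_self i
    have hmemU : ∀ v : Fin (m + n),
        v ∈ (↑({i} : Finset (Fin (m + n))) ∪ ↑N : Set (Fin (m + n))) ↔
          v = i ∨ (m ≤ (v : ℕ) ∧ (v : ℕ) ≠ m + (i : ℕ)) := by
      intro v
      simp only [Set.mem_union, Finset.coe_singleton, Set.mem_singleton_iff, Finset.mem_coe,
        hNmem]
    refine ⟨?_, ?_, ?_⟩
    · -- B(T) connected: star with center i
      apply star_connected _ _ i ((hmemU i).2 (Or.inl rfl))
      intro v hv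
      rcases (hmemU v).1 hv with h1 | h2
      · exact Or.inl h1
      · refine Or.inr ?_
        rw [hBT, SimpleGraph.fromRel_adj]
        refine ⟨Fin.ne_of_val_ne (by omega), Or.inl ⟨?_, hiT, (hNmem v).2 h2⟩⟩
        rw [gmnr_adj]
        exact ⟨Fin.ne_of_val_ne (by omega), Or.inl ⟨him, h2.1, by omega⟩⟩
    all_goals {
      have hmemC : ∀ v : Fin (m + n),
          v ∈ ((↑({i} : Finset (Fin (m + n))) ∪ ↑N : Set (Fin (m + n)))ᶜ) ↔
            v ≠ i ∧ ((v : ℕ) < m ∨ (v : ℕ) = m + (i : ℕ)) := by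
        intro v
        rw [Set.mem_compl_iff, hmemU]
        push_neg
        constructor
        · rintro ⟨h1, h2⟩
          refine ⟨h1, ?_⟩
          by_cases hvm : (v : ℕ) < m
          · exact Or.inl hvm
          · exact Or.inr (h2 (le_of_not_gt hvm))
        · rintro ⟨h1, h2⟩
          refine ⟨h1, fun hv => ?_⟩
          rcases h2 with h2 | h2
          · omega
          · exact h2
      set c : Fin (m + n) := ⟨m + (i : ℕ), by omega⟩ with hc
      have hcval : (c : ℕ) = m + (i : ℕ) := rfl
      have hcC : c ∈ ((↑({i} : Finset (Fin (m + n))) ∪ ↑N : Set (Fin (m + n)))ᶜ) :=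
        (hmemC c).2 ⟨Fin.ne_of_val_ne (by omega), Or.inr rfl⟩
      have hadjc : ∀ v : Fin (m + n), (v : ℕ) < m → v ≠ i → (Gmnr m n r).Adj c v := by
        intro v hv hvi
        have hvi' : (v : ℕ) ≠ (i : ℕ) := fun h => hvi (Fin.ext h)
        rw [gmnr_adj]
        exact ⟨Fin.ne_of_val_ne (by omega), Or.inr ⟨hv, by omega, by omega⟩⟩
      first
      | -- connectivity of complement: star with center c = m + i
        (apply star_connected _ _ c hcC
         intro v hv
         rcases (hmemC v).1 hv with ⟨h1, h2 | h2⟩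
         · exact Or.inr (hadjc v h2 h1)
         · exact Or.inl (Fin.ext (h2.trans hcval.symm)))
      | -- existence of an edge
        (have hjlt : (if (i : ℕ) = 0 then 1 else 0) < m + n := by split <;> omega
         set j : Fin (m + n) := ⟨if (i : ℕ) = 0 then 1 else 0, hjlt⟩ with hj
         have hjval : (j : ℕ) = if (i : ℕ) = 0 then 1 else 0 := rfl
         have hjm : (j : ℕ) < m := by rw [hjval]; split <;> omega
         have hji : j ≠ i := Fin.ne_of_val_ne (by rw [hjval]; split <;> omega)
         have hjC : j ∈ ((↑({i} : Finset (Fin (m + n))) ∪ ↑N : Set (Fin (m + n)))ᶜ) :=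
           (hmemC j).2 ⟨hji, Or.inl hjm⟩
         exact ⟨⟨c, hcC⟩, ⟨j, hjC⟩, hadjc j hjm hji⟩)
    }
end
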